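/- (Poisson summation formula for the Hartley transform.) Let f : ℝ → ℝ be a Schwartz function and let a, b > 0. Then for every x ∈ ℝ, a·b·∑_{r∈ℤ} f(b(ar + x)) = √(2π) ∑_{m∈ℤ} (𝓗f)(2πm/(ab)) · cas(2πmx/a), both series converging absolutely. -/

import Mathlib

/-- The cas function, `cas x = cos x - sin x`. -/
noncomputable def cas (x : ℝ) : ℝ := Real.cos x - Real.sin x

/-- The Hartley transform `(𝓗 f)(λ) = (1/√(2π)) ∫ f(x) cas(λ x) dx`. -/
noncomputable def hartley (f : ℝ → ℝ) (l : ℝ) : ℝ :=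
    (1 / Real.sqrt (2 * Real.pi)) * ∫ x : ℝ, f x * cas (l * x)

/-!
Rescaling reduces the formula to `∑ₙ h (t + n) = ∑ₙ √(2π) (𝓗 h)(2πn) cas(2πnt)` for the
Schwartz function `h = f (ab ·)` and `t = x / a`. With `z = 𝓕 h (n)` and `w = e^{2πint}` one has
`√(2π) (𝓗 h)(2πn) = Re z + Im z` and `cas(2πnt) = Re w - Im w`, and
`(Re z + Im z)(Re w - Im w) = Re (z w) - Im (z̄ w)`.
Summed over `n`, the first term gives `∑ₙ h (t + n)` by the classical Poisson summation formula,
while the second sums to zero: `h` is real, so `z̄ = 𝓕 h (-n)` and `Im (z̄ w)` is odd in `n`.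
-/

open MeasureTheory Real FourierTransform ComplexConjugate SchwartzMap

theorem SchwartzMap.summable_norm_add_intCast {E : Type*} [NormedAddCommGroup E]
    [NormedSpace ℝ E] (f : 𝓢(ℝ, E)) (t : ℝ) : Summable fun n : ℤ => ‖f (t + n)‖ := by
  let g : 𝓢(ℝ, E) := compCLMOfAntilipschitz ℝ (g := (t + ·)) (by fun_prop)
    (isometry_add_left t).antilipschitz f
  exact summable_of_isBigO (Real.summable_abs_int_rpow one_lt_two)
    ((g.isBigO_cocompact_rpow (-2)).norm_left.comp_tendsto Int.tendsto_coe_cofinite)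

theorem Real.fourier_ofReal_neg (h : ℝ → ℝ) (ξ : ℝ) :
    𝓕 (fun v => (h v : ℂ)) (-ξ) = conj (𝓕 (fun v => (h v : ℂ)) ξ) := by
  simp only [Real.fourier_real_eq, ← integral_conj]
  congr 1 with v
  simp [Circle.smul_def, ← Circle.coe_inv_eq_conj, ← AddChar.map_neg_eq_inv]

theorem tsum_im_eq_zero_of_neg_eq_conj {ι : Type*} [InvolutiveNeg ι] {φ : ι → ℂ}
    (hφ : ∀ i, φ (-i) = conj (φ i)) : ∑' i, (φ i).im = 0 := by
  have h : ∑' i, (φ i).im = -∑' i, (φ i).im :=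
    calc ∑' i, (φ i).im = ∑' i, (φ (-i)).im :=
          ((Equiv.neg ι).tsum_eq fun i => (φ i).im).symm
    _ = ∑' i, -(φ i).im := by simp [hφ]
    _ = -∑' i, (φ i).im := tsum_neg
  linarith

theorem Complex.re_add_im_mul_re_sub_im (z w : ℂ) :
    (z.re + z.im) * (w.re - w.im) = (z * w).re - (conj z * w).im := by
  simp only [mul_re, mul_im, conj_re, conj_im]; ring

theorem cas_eq_re_sub_im_fourier (n : ℤ) (t : ℝ) :
    cas (2 * π * n * t) =
      (fourier n (t : UnitAddCircle)).re - (fourier n (t : UnitAddCircle)).im := by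
  have harg : 2 * π * Complex.I * n * t / (1 : ℝ) = (2 * π * n * t : ℝ) * Complex.I := by
    push_cast; ring
  rw [fourier_coe_apply, harg, Complex.exp_ofReal_mul_I_re, Complex.exp_ofReal_mul_I_im, cas]

theorem sqrt_two_pi_mul_hartley_eq_re_add_im {h : ℝ → ℝ} (hh : Integrable h) (ξ : ℝ) :
    √(2 * π) * hartley h (2 * π * ξ) =
      (𝓕 (fun v => (h v : ℂ)) ξ).re + (𝓕 (fun v => (h v : ℂ)) ξ).im := by
  have hint : Integrable fun v : ℝ => 𝐞 (-(v * ξ)) • (h v : ℂ) := by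
    simpa [mul_comm] using
      (Real.fourierIntegral_convergent_iff (μ := volume) ξ).2 (hh.ofReal (𝕜 := ℂ))
  rw [Real.fourier_real_eq, ← Complex.reCLM_apply, ← Complex.imCLM_apply,
    ← add_apply, ← ContinuousLinearMap.integral_comp_comm _ hint, hartley,
    ← mul_assoc, one_div, mul_inv_cancel₀ (by positivity), one_mul]
  congr 1 with v
  simp only [cas, Circle.smul_def, fourierChar_apply, smul_eq_mul, add_apply, Complex.reCLM_apply,
    Complex.imCLM_apply, Complex.re_mul_ofReal, Complex.im_mul_ofReal, Complex.exp_ofReal_mul_I_re,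
    Complex.exp_ofReal_mul_I_im, mul_neg, cos_neg, sin_neg]
  ring_nf

theorem SchwartzMap.hasSum_hartley_mul_cas (h : 𝓢(ℝ, ℝ)) (t : ℝ) :
    HasSum (fun n : ℤ => √(2 * π) * hartley h (2 * π * n) * cas (2 * π * n * t))
      (∑' n : ℤ, h (t + n)) := by
  set H : 𝓢(ℝ, ℂ) := postcompCLM (𝕜 := ℝ) Complex.ofRealCLM h
  have hH : ⇑H = fun v => (h v : ℂ) := funext fun v => postcompCLM_apply _ _ v
  set z : ℤ → ℂ := fun n => 𝓕 (fun v => (h v : ℂ)) n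
  set w : ℤ → ℂ := fun n => fourier n (t : UnitAddCircle)
  have hFH : ∀ ξ, 𝓕 H ξ = 𝓕 (fun v => (h v : ℂ)) ξ := fun ξ => by rw [fourier_coe, hH]
  have hz : Summable fun n => ‖z n‖ :=
    ((𝓕 H).summable_norm_add_intCast 0).congr fun n => by rw [zero_add, hFH]
  have hw : ∀ n, ‖w n‖ = 1 := fun n => Circle.norm_coe _
  have hP : HasSum (fun n => z n * w n) (∑' n : ℤ, h (t + n) : ℝ) := by
    have hs : Summable fun n => z n * w n := .of_norm (by simpa [hw] using hz)
    have hpoisson : ((∑' n : ℤ, h (t + n) : ℝ) : ℂ) = ∑' n, z n * w n :=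
      calc ((∑' n : ℤ, h (t + n) : ℝ) : ℂ) = ∑' n : ℤ, H (t + n) := by
            rw [Complex.ofReal_tsum, hH]
        _ = ∑' n : ℤ, 𝓕 H n * fourier n (t : UnitAddCircle) := H.tsum_eq_tsum_fourier t
        _ = ∑' n, z n * w n := by simp only [hFH, z, w]
    exact hpoisson ▸ hs.hasSum
  have hQ : HasSum (fun n => (conj (z n) * w n).im) 0 := by
    have hs : Summable fun n => conj (z n) * w n := .of_norm (by simpa [hw] using hz)
    have hodd : ∑' n, (conj (z n) * w n).im = 0 :=
      tsum_im_eq_zero_of_neg_eq_conj fun n => by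
        simp only [z, w, Int.cast_neg, Real.fourier_ofReal_neg, fourier_neg, map_mul,
          Complex.conj_conj]
    exact hodd ▸ (Complex.hasSum_im hs.hasSum).summable.hasSum
  have hre := (Complex.hasSum_re hP).sub hQ
  rw [Complex.ofReal_re, sub_zero] at hre
  have hterm : ∀ n : ℤ, √(2 * π) * hartley h (2 * π * n) * cas (2 * π * n * t) =
      (z n * w n).re - (conj (z n) * w n).im := fun n => by
    rw [cas_eq_re_sub_im_fourier, sqrt_two_pi_mul_hartley_eq_re_add_im h.integrable,
      Complex.re_add_im_mul_re_sub_im]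
  simpa only [hterm] using hre

theorem hartley_comp_mul_right (f : ℝ → ℝ) {c : ℝ} (hc : c ≠ 0) (l : ℝ) :
    hartley (fun v => f (v * c)) l = |c⁻¹| * hartley f (l / c) := by
  have hscale := Measure.integral_comp_mul_right (fun u => f u * cas (l / c * u)) c
  have harg : ∀ v, l / c * (v * c) = l * v := fun v => by field_simp
  simp only [harg] at hscale
  rw [hartley, hartley, hscale, smul_eq_mul]
  ring

/-- Poisson summation formula for the Hartley transform: for a Schwartz function `f`
and `a, b > 0`,
`a b ∑_{r ∈ ℤ} f(b(ar + x)) = √(2π) ∑_{m ∈ ℤ} (𝓗 f)(2πm/(ab)) cas(2πmx/a)`,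
both series converging absolutely. -/
theorem hartley_poisson_summation (f : SchwartzMap ℝ ℝ) (a b : ℝ)
    (ha : 0 < a) (hb : 0 < b) (x : ℝ) :
    Summable (fun r : ℤ => |f (b * (a * r + x))|) ∧
    Summable (fun m : ℤ =>
      |hartley (fun y => f y) (2 * Real.pi * m / (a * b)) * cas (2 * Real.pi * m * x / a)|) ∧
    a * b * ∑' r : ℤ, f (b * (a * r + x)) =
      Real.sqrt (2 * Real.pi) *
        ∑' m : ℤ, hartley (fun y => f y) (2 * Real.pi * m / (a * b)) *
          cas (2 * Real.pi * m * x / a) := by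
  have hc : a * b ≠ 0 := (mul_pos ha hb).ne'
  let h : 𝓢(ℝ, ℝ) := compCLMOfContinuousLinearEquiv ℝ
    (ContinuousLinearEquiv.unitsEquivAut ℝ (Units.mk0 (a * b) hc)) f
  have h_apply : ∀ r : ℤ, h (x / a + r) = f (b * (a * r + x)) := fun r => by
    simp only [h, compCLMOfContinuousLinearEquiv_apply, Function.comp_apply,
      ContinuousLinearEquiv.unitsEquivAut_apply, Units.val_mk0]
    congr 1; field_simp; ring
  have h_hartley : ∀ m : ℤ,
      hartley h (2 * π * m) = (a * b)⁻¹ * hartley f (2 * π * m / (a * b)) := fun m => by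
    rw [← abs_of_pos (inv_pos.2 (mul_pos ha hb)), ← hartley_comp_mul_right _ hc]
    rfl
  have hs : HasSum (fun m : ℤ => hartley f (2 * π * m / (a * b)) * cas (2 * π * m * x / a))
      (a * b / √(2 * π) * ∑' r : ℤ, f (b * (a * r + x))) := by
    have hterm : ∀ m : ℤ, a * b / √(2 * π) * (√(2 * π) * hartley h (2 * π * m) *
        cas (2 * π * m * (x / a))) = hartley f (2 * π * m / (a * b)) * cas (2 * π * m * x / a) :=
      fun m => by rw [h_hartley]; field_simp
    simpa only [hterm, h_apply] using
      (h.hasSum_hartley_mul_cas (x / a)).mul_left (a * b / √(2 * π))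
  refine ⟨?_, summable_abs_iff.2 hs.summable, ?_⟩
  · simpa only [h_apply, Real.norm_eq_abs] using h.summable_norm_add_intCast (x / a)
  · rw [hs.tsum_eq]
    field_simp
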